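/- Fix an integer N ≥ 1 and real numbers μ_i[0] > 0 for 0 ≤ i ≤ N−1, and let the sequences μ_i : ℕ → (0,∞) be determined by the recursion μ_i[n+1] = μ_i[n]·exp( 2·Σ_{j=0}^{i−1} μ_j[n+1] ). Then for every 0 ≤ j ≤ N−1 and every n ∈ ℕ: μ_j[n] ≥ μ_j[0]·exp( 2n·Σ_{k=0}^{j−1} μ_k[0] ). -/

import Mathlib

/-!
Since all `μ_k` are nonnegative, every factor `exp (2 Σ_{k<i} μ_k[n+1])` is at least `1`,
so each sequence `μ_i` is nondecreasing. Hence `μ_k[n+1] ≥ μ_k[0]`, so every step multiplies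
`μ_j` by at least `exp (2 Σ_{k<j} μ_k[0])`, and iterating this `n` times gives the bound.
-/

/-- The recursive system modelling the energy exchange between `N` spherically symmetric
Vlasov beams: `μ_i[n+1] = μ_i[n]·exp(2·Σ_{j=0}^{i−1} μ_j[n+1])` for `0 ≤ i ≤ N−1`
(the empty sum being `0` for `i = 0`). -/
def MuRec (N : ℕ) (μ : ℕ → ℕ → ℝ) : Prop :=
  ∀ i < N, ∀ n : ℕ,
    μ i (n + 1) = μ i n * Real.exp (2 * ∑ j ∈ Finset.range i, μ j (n + 1))

namespace MuRec

variable {N : ℕ} {μ : ℕ → ℕ → ℝ}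

theorem le_succ (hrec : MuRec N μ) (hnonneg : ∀ i < N, ∀ n, 0 ≤ μ i n) {i : ℕ}
    (hi : i < N) (n : ℕ) : μ i n ≤ μ i (n + 1) := by
  have hsum : 0 ≤ ∑ k ∈ Finset.range i, μ k (n + 1) :=
    Finset.sum_nonneg fun k hk => hnonneg k ((Finset.mem_range.mp hk).trans hi) _
  rw [hrec i hi n]
  exact le_mul_of_one_le_right (hnonneg i hi n) (Real.one_le_exp (by positivity))

theorem monotone (hrec : MuRec N μ) (hnonneg : ∀ i < N, ∀ n, 0 ≤ μ i n) {i : ℕ}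
    (hi : i < N) : Monotone (μ i) :=
  monotone_nat_of_le_succ (hrec.le_succ hnonneg hi)

theorem exp_sum_init_mul_le_succ (hrec : MuRec N μ) (hnonneg : ∀ i < N, ∀ n, 0 ≤ μ i n)
    {i : ℕ} (hi : i < N) (n : ℕ) :
    Real.exp (2 * ∑ k ∈ Finset.range i, μ k 0) * μ i n ≤ μ i (n + 1) := by
  have hsum : ∑ k ∈ Finset.range i, μ k 0 ≤ ∑ k ∈ Finset.range i, μ k (n + 1) :=
    Finset.sum_le_sum fun k hk =>
      hrec.monotone hnonneg ((Finset.mem_range.mp hk).trans hi) (Nat.zero_le _)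
  rw [hrec i hi n, mul_comm]
  gcongr
  exact hnonneg i hi n

end MuRec

theorem mu_system_exponential_lower_bound_general (N : ℕ) (μ : ℕ → ℕ → ℝ)
    (hpos : ∀ i < N, ∀ n : ℕ, 0 < μ i n)
    (hrec : MuRec N μ) :
    ∀ j < N, ∀ n : ℕ,
      μ j 0 * Real.exp (2 * n * ∑ k ∈ Finset.range j, μ k 0) ≤ μ j n := by
  intro j hj n
  have hnonneg : ∀ i < N, ∀ n, 0 ≤ μ i n := fun i hi n => (hpos i hi n).le
  have hgeom :=
    geom_le (Real.exp_pos _).le n fun k _ => hrec.exp_sum_init_mul_le_succ hnonneg hj k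
  rwa [← Real.exp_nat_mul, mul_comm, ← mul_assoc, mul_comm (n : ℝ)] at hgeom

/-- **Exponential lower bound for the beam-interaction recursion.**
`μ_j[n] ≥ μ_j[0]·exp(2n·Σ_{k=0}^{j−1} μ_k[0])`. -/
theorem mu_system_exponential_lower_bound (N : ℕ) (hN : 1 ≤ N) (μ : ℕ → ℕ → ℝ)
    (hpos : ∀ i < N, ∀ n : ℕ, 0 < μ i n) (hμ0 : ∀ i < N, 0 < μ i 0)
    (hrec : MuRec N μ) :
    ∀ j < N, ∀ n : ℕ,
      μ j 0 * Real.exp (2 * n * ∑ k ∈ Finset.range j, μ k 0) ≤ μ j n :=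
  mu_system_exponential_lower_bound_general N μ hpos hrec
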